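/- Let N ≥ 1, let A : B^N → ℝ^{N×N} be a C¹ field of symmetric positive semi-definite matrices (i.e. A(x) ξ · ξ ≥ 0 for every x ∈ B^N and ξ ∈ ℝ^N), and let ψ : B^N → ℝ be smooth and positive. Then for every u ∈ C_c^∞(B^N, ℝ): ∫_{B^N} A(x) ∇u · ∇u dx = ∫_{B^N} ψ² A(x) ∇(u/ψ) · ∇(u/ψ) dx − ∫_{B^N} (u²/ψ) ∇·(A(x) ∇ψ) dx. -/

import Mathlib

open MeasureTheory Metric Set

noncomputable section

/-- `ℝ^N` with the Euclidean structure. -/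
abbrev Euc (N : ℕ) : Type := EuclideanSpace ℝ (Fin N)

/-- The surface measure `σ` on the unit sphere `S^{N-1} ⊆ ℝ^N`. -/
def sphMeasure (N : ℕ) : Measure (Metric.sphere (0 : Euc N) 1) :=
  (volume : Measure (Euc N)).toSphere

/-- The Laplacian `Δ v` of a scalar function on `ℝ^N`. -/
def lap {N : ℕ} (v : Euc N → ℝ) (x : Euc N) : ℝ :=
  ∑ i : Fin N, fderiv ℝ (fun y => fderiv ℝ v y (EuclideanSpace.single i 1)) x
    (EuclideanSpace.single i 1)

/-- The squared Frobenius norm `|∇U|²` of the differential of a map `U`. -/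
def gradSq {N M : ℕ} (U : Euc N → Euc M) (x : Euc N) : ℝ :=
  ∑ i : Fin N, ‖fderiv ℝ U x (EuclideanSpace.single i 1)‖ ^ 2

/-- The quadratic form `ξ ↦ A(x)ξ·ξ` of a matrix field `A`. -/
def quadForm {N : ℕ} (A : Euc N → Fin N → Fin N → ℝ) (x : Euc N) (ξ : Fin N → ℝ) : ℝ :=
  ∑ i : Fin N, ∑ j : Fin N, A x i j * ξ i * ξ j

/-- The divergence `∇·(A∇ψ)` of the vector field `x ↦ A(x)∇ψ(x)`. -/
def divAgrad {N : ℕ} (A : Euc N → Fin N → Fin N → ℝ) (ψ : Euc N → ℝ) (x : Euc N) : ℝ :=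
  ∑ i : Fin N,
    fderiv ℝ (fun y => ∑ j : Fin N, A y i j * gradient ψ y j) x (EuclideanSpace.single i 1)

/-! ### Auxiliary lemmas -/

/-- Coordinates of the gradient are directional derivatives. -/
lemma grad_coord {N : ℕ} (f : Euc N → ℝ) (x : Euc N) (i : Fin N) :
    gradient f x i = fderiv ℝ f x (EuclideanSpace.single i 1) := by
  have h : (inner ℝ (gradient f x) (EuclideanSpace.single i (1:ℝ)) : ℝ)
      = fderiv ℝ f x (EuclideanSpace.single i 1) :=
    InnerProductSpace.toDual_symm_apply
  rwa [EuclideanSpace.inner_single_right, RCLike.conj_to_real, one_mul] at h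

/-- Directional derivative of a quotient. -/
lemma fderiv_div_apply {N : ℕ} {f g : Euc N → ℝ} {x : Euc N}
    (hf : DifferentiableAt ℝ f x) (hg : DifferentiableAt ℝ g x) (h : g x ≠ 0) (e : Euc N) :
    fderiv ℝ (fun y => f y / g y) x e
      = (fderiv ℝ f x e * g x - f x * fderiv ℝ g x e) / g x ^ 2 := by
  have hinv : HasFDerivAt (fun y => (g y)⁻¹) ((-(g x ^ 2)⁻¹) • fderiv ℝ g x) x :=
    (hasDerivAt_inv h).comp_hasFDerivAt x hg.hasFDerivAt
  have hmul : HasFDerivAt (fun y => f y * (g y)⁻¹)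
      (f x • ((-(g x ^ 2)⁻¹) • fderiv ℝ g x) + (g x)⁻¹ • fderiv ℝ f x) x :=
    hf.hasFDerivAt.mul hinv
  have heq : (fun y => f y / g y) = fun y => f y * (g y)⁻¹ := by
    funext y; rw [div_eq_mul_inv]
  rw [heq, hmul.fderiv]
  simp only [ContinuousLinearMap.add_apply, ContinuousLinearMap.coe_smul', Pi.smul_apply,
    smul_eq_mul]
  field_simp
  ring

/-- The key algebraic identity behind the Hardy decomposition. -/
lemma key_alg {n : ℕ} (M : Fin n → Fin n → ℝ) (hsym : ∀ i j, M i j = M j i)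
    (a b : Fin n → ℝ) (t p : ℝ) (hp : p ≠ 0) :
    ∑ i, ∑ j, M i j * a i * a j
      = p ^ 2 * (∑ i, ∑ j, M i j * ((a i * p - t * b i) / p ^ 2) * ((a j * p - t * b j) / p ^ 2))
        + ∑ i, ((2 * t * a i * p - t ^ 2 * b i) / p ^ 2) * (∑ j, M i j * b j) := by
  have hswap : ∑ i, ∑ j, M i j * (a i * b j) = ∑ i, ∑ j, M i j * (b i * a j) := by
    rw [Finset.sum_comm]
    refine Finset.sum_congr rfl fun i _ => Finset.sum_congr rfl fun j _ => ?_
    rw [hsym j i]; ring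
  have hterm : ∀ i j : Fin n,
      p ^ 2 * (M i j * ((a i * p - t * b i) / p ^ 2) * ((a j * p - t * b j) / p ^ 2))
        + ((2 * t * a i * p - t ^ 2 * b i) / p ^ 2) * (M i j * b j)
      = M i j * a i * a j + (t / p) * (M i j * (a i * b j)) - (t / p) * (M i j * (b i * a j)) := by
    intro i j; field_simp; ring
  have hRHS : p ^ 2 * (∑ i, ∑ j, M i j * ((a i * p - t * b i) / p ^ 2)
          * ((a j * p - t * b j) / p ^ 2))
        + ∑ i, ((2 * t * a i * p - t ^ 2 * b i) / p ^ 2) * (∑ j, M i j * b j)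
      = ∑ i, ∑ j, (M i j * a i * a j + (t / p) * (M i j * (a i * b j))
          - (t / p) * (M i j * (b i * a j))) := by
    rw [Finset.mul_sum, ← Finset.sum_add_distrib]
    refine Finset.sum_congr rfl fun i _ => ?_
    rw [Finset.mul_sum, Finset.mul_sum, ← Finset.sum_add_distrib]
    exact Finset.sum_congr rfl fun j _ => hterm i j
  rw [hRHS]
  simp only [Finset.sum_sub_distrib, Finset.sum_add_distrib, ← Finset.mul_sum]
  rw [hswap]
  ring

/-- Hardy decomposition, Lemma 2.2: for a `C¹` non-negative symmetric
matrix field `A`, a smooth positive `ψ` and `u ∈ C_c^∞(B^N)`,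
`∫ A∇u·∇u = ∫ ψ² A∇(u/ψ)·∇(u/ψ) − ∫ (u²/ψ) ∇·(A∇ψ)`. -/
theorem hardy_decomposition
    {N : ℕ} (hN : 1 ≤ N)
    (A : Euc N → Fin N → Fin N → ℝ) (hA : ContDiffOn ℝ 1 A (ball 0 1))
    (hAsymm : ∀ x ∈ ball (0 : Euc N) 1, ∀ i j : Fin N, A x i j = A x j i)
    (hApsd : ∀ x ∈ ball (0 : Euc N) 1, ∀ ξ : Fin N → ℝ, 0 ≤ quadForm A x ξ)
    (ψ : Euc N → ℝ) (hψ : ContDiffOn ℝ (⊤ : ℕ∞) ψ (ball 0 1))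
    (hψpos : ∀ x ∈ ball (0 : Euc N) 1, 0 < ψ x)
    (u : Euc N → ℝ) (hu : ContDiff ℝ (⊤ : ℕ∞) u) (husupp : HasCompactSupport u)
    (husub : tsupport u ⊆ ball (0 : Euc N) 1) :
    (∫ x in ball (0 : Euc N) 1, quadForm A x (fun i => gradient u x i))
      = (∫ x in ball (0 : Euc N) 1,
          (ψ x) ^ 2 * quadForm A x (fun i => gradient (fun y => u y / ψ y) x i))
        - ∫ x in ball (0 : Euc N) 1, ((u x) ^ 2 / ψ x) * divAgrad A ψ x := by
  classical
  have hBo : IsOpen (ball (0 : Euc N) 1) := isOpen_ball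
  have hKc : IsCompact (tsupport u) := husupp
  have hKB : tsupport u ⊆ ball (0 : Euc N) 1 := husub
  -- vanishing facts outside the support of `u`
  have hnK : ∀ x ∉ tsupport u, ∀ᶠ y in nhds x, y ∉ tsupport u := fun x hx =>
    Filter.eventually_of_mem ((isClosed_tsupport u).isOpen_compl.mem_nhds hx) fun y hy => hy
  have hu_z : ∀ y ∉ tsupport u, u y = 0 := fun y hy => image_eq_zero_of_notMem_tsupport hy
  have hfu_z : ∀ y ∉ tsupport u, fderiv ℝ u y = 0 := by
    intro y hy
    by_contra h
    exact hy (support_fderiv_subset ℝ (Function.mem_support.2 h))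
  -- smoothness facts for ψ on the ball
  have hψat : ∀ x ∈ ball (0 : Euc N) 1, ContDiffAt ℝ (⊤ : ℕ∞) ψ x := fun x hx =>
    hψ.contDiffAt (hBo.mem_nhds hx)
  have hψd : ∀ x ∈ ball (0 : Euc N) 1, DifferentiableAt ℝ ψ x := fun x hx =>
    (hψat x hx).differentiableAt (by simp)
  have hψne : ∀ x ∈ ball (0 : Euc N) 1, ψ x ≠ 0 := fun x hx => ne_of_gt (hψpos x hx)
  have hud : ∀ x, DifferentiableAt ℝ u x := fun x => hu.differentiable (by simp) x
  -- v = u/ψ and w = u²/ψ are globally smooth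
  have hv : ContDiff ℝ (⊤ : ℕ∞) (fun y => u y / ψ y) := by
    rw [contDiff_iff_contDiffAt]
    intro x
    by_cases hx : x ∈ ball (0 : Euc N) 1
    · exact (hu.contDiffAt).div (hψat x hx) (hψne x hx)
    · refine (contDiffAt_const (c := (0:ℝ))).congr_of_eventuallyEq ?_
      filter_upwards [hnK x fun h => hx (hKB h)] with y hy
      simp [hu_z y hy]
  have hw : ContDiff ℝ (⊤ : ℕ∞) (fun y => u y ^ 2 / ψ y) := by
    rw [contDiff_iff_contDiffAt]
    intro x
    by_cases hx : x ∈ ball (0 : Euc N) 1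
    · exact (hu.contDiffAt.pow 2).div (hψat x hx) (hψne x hx)
    · refine (contDiffAt_const (c := (0:ℝ))).congr_of_eventuallyEq ?_
      filter_upwards [hnK x fun h => hx (hKB h)] with y hy
      simp [hu_z y hy]
  have hfv_z : ∀ y ∉ tsupport u, fderiv ℝ (fun y => u y / ψ y) y = 0 := by
    intro y hy
    have h : (fun y => u y / ψ y) =ᶠ[nhds y] fun _ => (0:ℝ) := by
      filter_upwards [hnK y hy] with z hz
      simp [hu_z z hz]
    rw [h.fderiv_eq, fderiv_const_apply]
  have hfw_z : ∀ y ∉ tsupport u, fderiv ℝ (fun y => u y ^ 2 / ψ y) y = 0 := by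
    intro y hy
    have h : (fun y => u y ^ 2 / ψ y) =ᶠ[nhds y] fun _ => (0:ℝ) := by
      filter_upwards [hnK y hy] with z hz
      simp [hu_z z hz]
    rw [h.fderiv_eq, fderiv_const_apply]
  -- regularity of the matrix field and of A∇ψ
  have hAij : ∀ i j : Fin N, ContDiffOn ℝ 1 (fun y => A y i j) (ball (0 : Euc N) 1) :=
    fun i j => contDiffOn_pi.1 (contDiffOn_pi.1 hA i) j
  have hgradj : ∀ j : Fin N, ContDiffOn ℝ 1 (fun y => gradient ψ y j) (ball (0 : Euc N) 1) := by
    intro j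
    have h1 : (fun y => gradient ψ y j)
        = fun y => fderiv ℝ ψ y (EuclideanSpace.single j 1) :=
      funext fun y => grad_coord ψ y j
    rw [h1]
    exact (hψ.fderiv_of_isOpen hBo (WithTop.coe_le_coe.2 (le_top : ((1 + 1 : ℕ) : ℕ∞) ≤ ⊤))).clm_apply contDiffOn_const
  have hF : ∀ i : Fin N, ContDiffOn ℝ 1 (fun y => ∑ j : Fin N, A y i j * gradient ψ y j)
      (ball (0 : Euc N) 1) := fun i =>
    ContDiffOn.sum fun j _ => (hAij i j).mul (hgradj j)
  have hFd : ∀ i : Fin N, ∀ x ∈ ball (0 : Euc N) 1,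
      DifferentiableAt ℝ (fun y => ∑ j : Fin N, A y i j * gradient ψ y j) x := fun i x hx =>
    ((hF i).differentiableOn one_ne_zero).differentiableAt (hBo.mem_nhds hx)
  -- the vector field G i = w ⬝ (A∇ψ)_i is globally C¹ with compact support
  have hG : ∀ i : Fin N, ContDiff ℝ 1
      (fun y => (u y ^ 2 / ψ y) * ∑ j : Fin N, A y i j * gradient ψ y j) := by
    intro i
    rw [contDiff_iff_contDiffAt]
    intro x
    by_cases hx : x ∈ ball (0 : Euc N) 1
    · exact ((hw.of_le (by simp)).contDiffAt).mul ((hF i).contDiffAt (hBo.mem_nhds hx))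
    · refine (contDiffAt_const (c := (0:ℝ))).congr_of_eventuallyEq ?_
      filter_upwards [hnK x fun h => hx (hKB h)] with y hy
      simp [hu_z y hy]
  have hGsupp : ∀ i : Fin N, HasCompactSupport
      (fun y => (u y ^ 2 / ψ y) * ∑ j : Fin N, A y i j * gradient ψ y j) := by
    intro i
    refine HasCompactSupport.of_support_subset_isCompact hKc ?_
    intro y hy
    simp only [Function.mem_support] at hy
    by_contra h
    exact hy (by simp [hu_z y h])
  have hIntG : ∀ i : Fin N, Integrable (fun x =>
      fderiv ℝ (fun y => (u y ^ 2 / ψ y) * ∑ j : Fin N, A y i j * gradient ψ y j) x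
        (EuclideanSpace.single i 1)) volume := by
    intro i
    refine Continuous.integrable_of_hasCompactSupport ?_ ((hGsupp i).fderiv_apply _ _)
    exact (ContinuousLinearMap.apply ℝ ℝ (EuclideanSpace.single i 1)).continuous.comp
      ((hG i).continuous_fderiv one_ne_zero)
  -- the divergence theorem for each coordinate of G
  have hdiv0 : ∀ i : Fin N,
      (∫ x, fderiv ℝ (fun y => (u y ^ 2 / ψ y) * ∑ j : Fin N, A y i j * gradient ψ y j) x
        (EuclideanSpace.single i 1)) = 0 := by
    intro i
    have h := integral_mul_fderiv_eq_neg_fderiv_mul_of_integrable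
      (f := fun y => (u y ^ 2 / ψ y) * ∑ j : Fin N, A y i j * gradient ψ y j)
      (g := fun _ => (1:ℝ)) (v := EuclideanSpace.single i 1) (μ := volume)
      (by simpa using hIntG i)
      (by simp only [fderiv_const_apply, ContinuousLinearMap.zero_apply, mul_zero]
          exact integrable_zero _ _ _)
      (by simpa using ((hG i).continuous).integrable_of_hasCompactSupport (hGsupp i))
      (fun x _ => (hG i).differentiable one_ne_zero x) (fun x _ => differentiable_const 1 x)
    simp only [fderiv_const_apply, ContinuousLinearMap.zero_apply, mul_zero, mul_one,
      integral_zero] at h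
    linarith
  -- pointwise identity (I)
  have hI : ∀ x, quadForm A x (fun i => gradient u x i)
      = ψ x ^ 2 * quadForm A x (fun i => gradient (fun y => u y / ψ y) x i)
        + ∑ i : Fin N, fderiv ℝ (fun y => u y ^ 2 / ψ y) x (EuclideanSpace.single i 1)
            * ∑ j : Fin N, A x i j * gradient ψ x j := by
    intro x
    by_cases hx : x ∈ ball (0 : Euc N) 1
    · have hpd := hψd x hx
      have hpne := hψne x hx
      have hdv : ∀ i : Fin N, gradient (fun y => u y / ψ y) x i
          = (fderiv ℝ u x (EuclideanSpace.single i 1) * ψ x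
            - u x * fderiv ℝ ψ x (EuclideanSpace.single i 1)) / ψ x ^ 2 := fun i => by
        rw [grad_coord]
        exact fderiv_div_apply (hud x) hpd hpne _
      have hdw : ∀ i : Fin N, fderiv ℝ (fun y => u y ^ 2 / ψ y) x (EuclideanSpace.single i 1)
          = (2 * u x * fderiv ℝ u x (EuclideanSpace.single i 1) * ψ x
            - u x ^ 2 * fderiv ℝ ψ x (EuclideanSpace.single i 1)) / ψ x ^ 2 := by
        intro i
        have h2 : fderiv ℝ (fun y => u y ^ 2) x (EuclideanSpace.single i 1)
            = 2 * u x * fderiv ℝ u x (EuclideanSpace.single i 1) := by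
          have h4 : HasFDerivAt (fun y => u y ^ 2)
              (u x • fderiv ℝ u x + u x • fderiv ℝ u x) x := by
            simpa only [pow_two] using (hud x).hasFDerivAt.fun_mul (hud x).hasFDerivAt
          rw [h4.fderiv]
          simp only [ContinuousLinearMap.add_apply, ContinuousLinearMap.coe_smul',
            Pi.smul_apply, smul_eq_mul]
          ring
        rw [fderiv_div_apply ((hud x).fun_pow 2) hpd hpne, h2]
      simp only [quadForm, hdv, hdw]
      simp only [grad_coord]
      exact key_alg (A x) (hAsymm x hx)
        (fun i => fderiv ℝ u x (EuclideanSpace.single i 1))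
        (fun i => fderiv ℝ ψ x (EuclideanSpace.single i 1)) (u x) (ψ x) hpne
    · have hxK : x ∉ tsupport u := fun h => hx (hKB h)
      simp [quadForm, grad_coord, hfu_z x hxK, hfv_z x hxK, hfw_z x hxK]
  -- pointwise identity (II)
  have hII : ∀ x, (∑ i : Fin N,
        fderiv ℝ (fun y => (u y ^ 2 / ψ y) * ∑ j : Fin N, A y i j * gradient ψ y j) x
          (EuclideanSpace.single i 1))
      = (u x ^ 2 / ψ x) * divAgrad A ψ x
        + ∑ i : Fin N, fderiv ℝ (fun y => u y ^ 2 / ψ y) x (EuclideanSpace.single i 1)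
            * ∑ j : Fin N, A x i j * gradient ψ x j := by
    intro x
    by_cases hx : x ∈ ball (0 : Euc N) 1
    · have hmul : ∀ i : Fin N,
          fderiv ℝ (fun y => (u y ^ 2 / ψ y) * ∑ j : Fin N, A y i j * gradient ψ y j) x
          = (u x ^ 2 / ψ x) • fderiv ℝ (fun y => ∑ j : Fin N, A y i j * gradient ψ y j) x
            + (∑ j : Fin N, A x i j * gradient ψ x j)
                • fderiv ℝ (fun y => u y ^ 2 / ψ y) x := fun i =>
        fderiv_mul (hw.differentiable (by simp) x) (hFd i x hx)
      simp only [hmul, ContinuousLinearMap.add_apply, ContinuousLinearMap.coe_smul',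
        Pi.smul_apply, smul_eq_mul, divAgrad]
      rw [Finset.sum_add_distrib, ← Finset.mul_sum]
      congr 1
      exact Finset.sum_congr rfl fun i _ => mul_comm _ _
    · have hxK : x ∉ tsupport u := fun h => hx (hKB h)
      have hg0 : ∀ i : Fin N,
          fderiv ℝ (fun y => (u y ^ 2 / ψ y) * ∑ j : Fin N, A y i j * gradient ψ y j) x
            = 0 := by
        intro i
        have h : (fun y => (u y ^ 2 / ψ y) * ∑ j : Fin N, A y i j * gradient ψ y j)
            =ᶠ[nhds x] fun _ => (0:ℝ) := by
          filter_upwards [hnK x hxK] with y hy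
          simp [hu_z y hy]
        rw [h.fderiv_eq, fderiv_const_apply]
      simp [hg0, hu_z x hxK, hfw_z x hxK]
  -- continuity of directional derivatives of globally smooth functions
  have hcfd : ∀ {f : Euc N → ℝ}, ContDiff ℝ (⊤ : ℕ∞) f → ∀ e : Euc N,
      Continuous fun x => fderiv ℝ f x e := fun hf e =>
    (ContinuousLinearMap.apply ℝ ℝ e).continuous.comp (hf.continuous_fderiv (by simp))
  -- gluing: continuity on the ball plus local vanishing off the support gives integrability
  have glue : ∀ f : Euc N → ℝ, (∀ x ∈ ball (0 : Euc N) 1, ContinuousAt f x) →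
      (∀ x ∉ tsupport u, f =ᶠ[nhds x] fun _ => (0:ℝ)) →
      Integrable f volume ∧ ∀ x, x ∉ ball (0 : Euc N) 1 → f x = 0 := by
    intro f h1 h0
    have hcont : Continuous f := by
      rw [continuous_iff_continuousAt]
      intro x
      by_cases hx : x ∈ ball (0 : Euc N) 1
      · exact h1 x hx
      · exact (h0 x fun h => hx (hKB h)).continuousAt
    have hz : ∀ x, x ∉ ball (0 : Euc N) 1 → f x = 0 := fun x hx =>
      (h0 x fun h => hx (hKB h)).eq_of_nhds
    refine ⟨hcont.integrable_of_hasCompactSupport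
      (HasCompactSupport.of_support_subset_isCompact hKc ?_), hz⟩
    intro y hy
    by_contra h
    exact (Function.mem_support.1 hy) ((h0 y h).eq_of_nhds)
  -- integrability of the four integrands
  obtain ⟨hInt1, hz1⟩ := glue (fun x => quadForm A x (fun i => gradient u x i))
    (by
      intro x hx
      simp only [quadForm, grad_coord]
      refine tendsto_finset_sum _ fun i _ => tendsto_finset_sum _ fun j _ => ?_
      exact ((((hAij i j).continuousOn.continuousAt (hBo.mem_nhds hx)).mul
        ((hcfd hu _).continuousAt)).mul ((hcfd hu _).continuousAt)))
    (by
      intro x hx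
      filter_upwards [hnK x hx] with y hy
      simp [quadForm, grad_coord, hfu_z y hy])
  obtain ⟨hInt2, hz2⟩ := glue
    (fun x => ψ x ^ 2 * quadForm A x (fun i => gradient (fun y => u y / ψ y) x i))
    (by
      intro x hx
      simp only [quadForm, grad_coord]
      refine ((hψ.continuousOn.continuousAt (hBo.mem_nhds hx)).pow 2).mul ?_
      refine tendsto_finset_sum _ fun i _ => tendsto_finset_sum _ fun j _ => ?_
      exact ((((hAij i j).continuousOn.continuousAt (hBo.mem_nhds hx)).mul
        ((hcfd hv _).continuousAt)).mul ((hcfd hv _).continuousAt)))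
    (by
      intro x hx
      filter_upwards [hnK x hx] with y hy
      simp [quadForm, grad_coord, hfv_z y hy])
  obtain ⟨hInt3, hz3⟩ := glue (fun x => (u x ^ 2 / ψ x) * divAgrad A ψ x)
    (by
      intro x hx
      refine (((hu.continuous.continuousAt).pow 2).div
        (hψ.continuousOn.continuousAt (hBo.mem_nhds hx)) (hψne x hx)).mul ?_
      show ContinuousAt (fun x => ∑ i : Fin N,
        fderiv ℝ (fun y => ∑ j : Fin N, A y i j * gradient ψ y j) x
          (EuclideanSpace.single i 1)) x
      refine tendsto_finset_sum _ fun i _ => ?_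
      exact ((ContinuousLinearMap.apply ℝ ℝ (EuclideanSpace.single i 1)).continuous.continuousAt).comp
        (((hF i).continuousOn_fderiv_of_isOpen hBo le_rfl).continuousAt (hBo.mem_nhds hx)))
    (by
      intro x hx
      filter_upwards [hnK x hx] with y hy
      simp [hu_z y hy])
  obtain ⟨hIntD, hzD⟩ := glue (fun x => ∑ i : Fin N,
      fderiv ℝ (fun y => u y ^ 2 / ψ y) x (EuclideanSpace.single i 1)
        * ∑ j : Fin N, A x i j * gradient ψ x j)
    (by
      intro x hx
      refine tendsto_finset_sum _ fun i _ => ?_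
      exact ((hcfd hw _).continuousAt).mul ((hF i).continuousOn.continuousAt (hBo.mem_nhds hx)))
    (by
      intro x hx
      filter_upwards [hnK x hx] with y hy
      simp [hfw_z y hy])
  -- pass from set integrals to integrals over the whole space
  rw [setIntegral_eq_integral_of_forall_compl_eq_zero hz1,
    setIntegral_eq_integral_of_forall_compl_eq_zero hz2,
    setIntegral_eq_integral_of_forall_compl_eq_zero hz3]
  have hstep1 : (∫ x, quadForm A x (fun i => gradient u x i))
      = (∫ x, ψ x ^ 2 * quadForm A x (fun i => gradient (fun y => u y / ψ y) x i))
        + ∫ x, ∑ i : Fin N,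
            fderiv ℝ (fun y => u y ^ 2 / ψ y) x (EuclideanSpace.single i 1)
              * ∑ j : Fin N, A x i j * gradient ψ x j := by
    rw [← integral_add hInt2 hIntD]
    exact integral_congr_ae (Filter.Eventually.of_forall hI)
  have hstep2 : (∫ x, (u x ^ 2 / ψ x) * divAgrad A ψ x)
      + (∫ x, ∑ i : Fin N,
          fderiv ℝ (fun y => u y ^ 2 / ψ y) x (EuclideanSpace.single i 1)
            * ∑ j : Fin N, A x i j * gradient ψ x j) = 0 := by
    rw [← integral_add hInt3 hIntD]
    have h : (∫ x, ((u x ^ 2 / ψ x) * divAgrad A ψ x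
        + ∑ i : Fin N, fderiv ℝ (fun y => u y ^ 2 / ψ y) x (EuclideanSpace.single i 1)
            * ∑ j : Fin N, A x i j * gradient ψ x j))
        = ∫ x, ∑ i : Fin N,
            fderiv ℝ (fun y => (u y ^ 2 / ψ y) * ∑ j : Fin N, A y i j * gradient ψ y j) x
              (EuclideanSpace.single i 1) :=
      integral_congr_ae (Filter.Eventually.of_forall fun x => (hII x).symm)
    rw [h, integral_finset_sum _ fun i _ => hIntG i]
    simp [hdiv0]
  linarith
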